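/- Let p_n be integers with |p_n| > 1 and D_n ⊂ ℤ finite sets for all n ≥ 1, and suppose C := sup_n max{|d/p_n| : d ∈ D_n} < ∞. For any n ≥ 1 and m > 0, set J₀ := max{⌊log₂(8Cm)⌋, 0} + 1. Then |p_{n+1}p_{n+2}⋯p_{n+J₀}|^{-1} · Cm < 1/4, and for every ξ ∈ ℝ with |ξ| < m, ∏_{j=1}^∞ |δ̂_{D_{n+J₀+j}}(ξ/(p_{n+1}⋯p_{n+J₀+j}))| ≥ 2/π. -/

import Mathlib

open MeasureTheory Filter Topology Set

noncomputable section

/-- `δ̂_D(ξ) = (1/#D) Σ_{d∈D} e^{2πi d ξ}` for a finite digit set `D ⊂ ℤ`. -/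
def dHat (D : Finset ℤ) (ξ : ℝ) : ℂ :=
  (D.card : ℂ)⁻¹ * ∑ d ∈ D, Complex.exp (2 * Real.pi * Complex.I * (d : ℝ) * ξ)

/-- `J₀ = max{⌊log₂(8Cm)⌋, 0} + 1`. -/
def J0 (C m : ℝ) : ℕ := (max ⌊Real.logb 2 (8 * C * m)⌋ 0).toNat + 1

end

/-!
Since `|p_i| ≥ 2`, the partial products `p_{n+1}⋯p_{n+J₀+j}` have modulus at least `2^{J₀+j}`,
and `2^{J₀} ≥ 8Cm`. Hence every frequency `2π d ξ / (p_{n+1}⋯p_{n+J₀+j})` with `d ∈ D_{n+J₀+j}`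
has modulus at most `π / 2^{j+1}`, so the `j`-th factor is at least `cos (π / 2^{j+1})`
(the real part of `δ̂` is an average of such cosines). Viète's identity
`2^N sin (x / 2^N) ∏_{j<N} cos (x / 2^{j+1}) = sin x` at `x = π / 2` bounds every finite
product of these cosines below by `2/π`.
-/

open Real Finset

lemma eight_mul_mul_le_two_pow_J0 (C m : ℝ) : 8 * C * m ≤ 2 ^ J0 C m := by
  rcases le_or_gt (8 * C * m) 0 with h | h
  · exact h.trans (by positivity)
  have hfloor : ⌊logb 2 (8 * C * m)⌋ ≤ ((max ⌊logb 2 (8 * C * m)⌋ 0).toNat : ℤ) :=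
    (le_max_left _ _).trans (Int.self_le_toNat _)
  have hlog : logb 2 (8 * C * m) < (J0 C m : ℝ) := by
    have := Int.lt_floor_add_one (logb 2 (8 * C * m))
    rw [J0, Nat.cast_add_one]
    exact this.trans_le (by exact_mod_cast add_le_add_left hfloor 1)
  rw [logb_lt_iff_lt_rpow one_lt_two h, rpow_natCast] at hlog
  exact hlog.le

lemma two_pow_card_le_abs_prod {ι : Type*} {p : ι → ℤ} (hp : ∀ i, 1 < |p i|) (s : Finset ι) :
    (2 : ℝ) ^ s.card ≤ |∏ i ∈ s, (p i : ℝ)| := by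
  rw [abs_prod, ← prod_const]
  refine prod_le_prod (fun _ _ => zero_le_two) fun i _ => ?_
  rw [← Int.cast_abs]
  exact_mod_cast hp i

lemma re_dHat (D : Finset ℤ) (ξ : ℝ) :
    (dHat D ξ).re = (D.card : ℝ)⁻¹ * ∑ d ∈ D, cos (2 * π * d * ξ) := by
  have hcard : ((D.card : ℂ))⁻¹ = (((D.card : ℝ)⁻¹ : ℝ) : ℂ) := by push_cast; rfl
  rw [dHat, hcard, Complex.re_ofReal_mul, Complex.re_sum]
  congr 1
  refine sum_congr rfl fun d _ => ?_
  rw [← Complex.exp_ofReal_mul_I_re]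
  push_cast
  ring_nf

lemma cos_le_norm_dHat {D : Finset ℤ} (hD : D.Nonempty) {ξ θ : ℝ} (hθ : θ ≤ π)
    (h : ∀ d ∈ D, |2 * π * d * ξ| ≤ θ) : cos θ ≤ ‖dHat D ξ‖ := by
  have hcos : ∀ d ∈ D, cos θ ≤ cos (2 * π * d * ξ) := fun d hd => by
    rw [← cos_abs (2 * π * d * ξ)]
    exact cos_le_cos_of_nonneg_of_le_pi (abs_nonneg _) hθ (h d hd)
  have hcard : (0 : ℝ) < D.card := by exact_mod_cast hD.card_pos
  calc cos θ = (D.card : ℝ)⁻¹ * (D.card • cos θ) := by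
        rw [nsmul_eq_mul, inv_mul_cancel_left₀ hcard.ne']
    _ ≤ (D.card : ℝ)⁻¹ * ∑ d ∈ D, cos (2 * π * d * ξ) := by
        gcongr
        exact card_nsmul_le_sum _ _ _ hcos
    _ = (dHat D ξ).re := (re_dHat D ξ).symm
    _ ≤ ‖dHat D ξ‖ := Complex.re_le_norm _

lemma two_pow_mul_sin_mul_prod_cos (x : ℝ) (N : ℕ) :
    2 ^ N * sin (x / 2 ^ N) * ∏ j ∈ range N, cos (x / 2 ^ (j + 1)) = sin x := by
  induction N with
  | zero => simp
  | succ N ih =>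
    have hdouble : sin (x / 2 ^ N) = 2 * sin (x / 2 ^ (N + 1)) * cos (x / 2 ^ (N + 1)) := by
      rw [← sin_two_mul, pow_succ]
      ring_nf
    rw [prod_range_succ, ← ih, hdouble]
    ring

lemma cos_pi_div_two_pow_pos (j : ℕ) : 0 < cos (π / 2 ^ (j + 2)) := by
  have h4 : (2 : ℝ) ^ 2 ≤ 2 ^ (j + 2) := pow_le_pow_right₀ one_le_two (by omega)
  have hpos : 0 < π / 2 ^ (j + 2) := by positivity
  refine cos_pos_of_mem_Ioo ⟨by linarith [pi_pos], ?_⟩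
  calc π / 2 ^ (j + 2) ≤ π / 2 ^ 2 := by gcongr
    _ < π / 2 := by linarith [pi_pos]

lemma two_div_pi_le_prod_range_cos (N : ℕ) :
    2 / π ≤ ∏ j ∈ range N, cos (π / 2 ^ (j + 2)) := by
  have hviete := two_pow_mul_sin_mul_prod_cos (π / 2) N
  simp only [div_div, ← pow_succ', sin_pi_div_two] at hviete
  have hsin : 2 ^ N * sin (π / 2 ^ (N + 1)) ≤ π / 2 := by
    calc 2 ^ N * sin (π / 2 ^ (N + 1)) ≤ 2 ^ N * (π / 2 ^ (N + 1)) := by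
          gcongr
          exact sin_le (by positivity)
      _ = π / 2 := by rw [pow_succ]; field_simp
  have hprod : 0 ≤ ∏ j ∈ range N, cos (π / 2 ^ (j + 2)) :=
    prod_nonneg fun j _ => (cos_pi_div_two_pow_pos j).le
  rw [div_le_iff₀' pi_pos]
  nlinarith

lemma two_div_pi_le_prod_of_cos_le {f : ℕ → ℝ} (hf : ∀ j, cos (π / 2 ^ (j + 2)) ≤ f j)
    (s : Finset ℕ) : 2 / π ≤ ∏ j ∈ s, f j := by
  obtain ⟨N, hN⟩ := s.exists_nat_subset_range
  have hpos (j : ℕ) := cos_pi_div_two_pow_pos j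
  calc 2 / π ≤ ∏ j ∈ range N, cos (π / 2 ^ (j + 2)) := two_div_pi_le_prod_range_cos N
    _ ≤ ∏ j ∈ s, cos (π / 2 ^ (j + 2)) :=
        prod_le_prod_of_subset_of_le_one hN (fun j _ => (hpos j).le) fun j _ _ => cos_le_one _
    _ ≤ ∏ j ∈ s, f j := prod_le_prod (fun j _ => (hpos j).le) fun j _ => hf j

lemma le_tprod_of_le_prod {ι α : Type*} [CommMonoid α] [TopologicalSpace α] [Preorder α]
    [ClosedIciTopology α] {f : ι → α} {a : α} (ha : a ≤ 1) (h : ∀ s, a ≤ ∏ i ∈ s, f i) :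
    a ≤ ∏' i, f i := by
  by_cases hf : Multipliable f
  · exact ge_of_tendsto' hf.hasProd h
  · rwa [tprod_eq_one_of_not_multipliable hf]

lemma abs_two_pi_mul_mul_div_prod_le {p : ℕ → ℤ} {D : ℕ → Finset ℤ} (hp : ∀ n, 1 < |p n|)
    {C : ℝ} (hC0 : 0 ≤ C) (hC : ∀ n, ∀ d ∈ D n, |(d : ℝ) / (p n : ℝ)| ≤ C)
    {m ξ : ℝ} (hξ : |ξ| < m) {J : ℕ} (hJ : 8 * C * m ≤ 2 ^ J) (n j : ℕ)
    {d : ℤ} (hd : d ∈ D (n + J + j)) :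
    |2 * π * d * (ξ / ∏ i ∈ Ico n (n + J + j + 1), (p i : ℝ))| ≤ π / 2 ^ (j + 2) := by
  set k := n + J + j
  set Q := ∏ i ∈ Ico n k, (p i : ℝ)
  have hQ : (2 : ℝ) ^ (J + j) ≤ |Q| := by
    simpa [k, Q, add_assoc] using two_pow_card_le_abs_prod hp (Ico n k)
  rw [prod_Ico_succ_top (by omega)]
  calc |2 * π * d * (ξ / (Q * p k))| = 2 * π * |(d : ℝ) / p k| * |ξ| / |Q| := by
        rw [abs_mul, abs_mul, abs_mul, abs_div, abs_div, abs_mul, abs_two, abs_of_pos pi_pos]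
        field_simp
    _ ≤ 2 * π * C * m / 2 ^ (J + j) := by
        have hm : 0 ≤ m := (abs_nonneg ξ).trans hξ.le
        gcongr
        exact hC k d hd
    _ = π / 4 * (8 * C * m) / 2 ^ J / 2 ^ j := by rw [pow_add]; ring
    _ ≤ π / 4 * 2 ^ J / 2 ^ J / 2 ^ j := by gcongr
    _ = π / 2 ^ (j + 2) := by field_simp; ring

/-- Indices are shifted by one: `p i`, `D i` stand for the paper's `p_{i+1}`, `D_{i+1}`. -/
theorem statement8_general
    (p : ℕ → ℤ) (D : ℕ → Finset ℤ)
    (hp : ∀ n, 1 < |p n|) (hD : ∀ n, (D n).Nonempty)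
    (C : ℝ) (hC0 : 0 ≤ C)
    (hC : ∀ n, ∀ d ∈ D n, |(d : ℝ) / (p n : ℝ)| ≤ C)
    (n : ℕ) (m : ℝ) :
    |∏ i ∈ Finset.Ico n (n + J0 C m), (p i : ℝ)|⁻¹ * (C * m) < 1 / 4 ∧
      ∀ ξ : ℝ, |ξ| < m →
        2 / Real.pi ≤
          ∏' j : ℕ, ‖(dHat (D (n + J0 C m + j))
            (ξ / ∏ i ∈ Finset.Ico n (n + J0 C m + j + 1), (p i : ℝ)))‖ := by
  have hJ := eight_mul_mul_le_two_pow_J0 C m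
  refine ⟨?_, fun ξ hξ => ?_⟩
  · have hA : (2 : ℝ) ^ J0 C m ≤ |∏ i ∈ Ico n (n + J0 C m), (p i : ℝ)| := by
      simpa using two_pow_card_le_abs_prod hp (Ico n (n + J0 C m))
    have h2J : (0 : ℝ) < 2 ^ J0 C m := by positivity
    rw [inv_mul_lt_iff₀ (h2J.trans_le hA)]
    linarith
  · refine le_tprod_of_le_prod (div_le_one_of_le₀ two_le_pi pi_pos.le)
      (two_div_pi_le_prod_of_cos_le fun j => cos_le_norm_dHat (hD _) ?_ fun d hd =>
        abs_two_pi_mul_mul_div_prod_le hp hC0 hC hξ hJ n j hd)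
    exact div_le_self pi_pos.le (one_le_pow₀ one_le_two)

/-- Lemma 3.9.  Let `|p_n| > 1` be integers and `D_n ⊂ ℤ` nonempty finite
digit sets with `C := sup_n max{|d/p_n| : d ∈ D_n} < ∞`.  For any `n ≥ 1` and `m > 0`, with
`J₀ := max{⌊log₂(8Cm)⌋, 0} + 1` we have `|p_{n+1}⋯p_{n+J₀}|⁻¹ · Cm < 1/4`, and
`∏_{j=1}^∞ |δ̂_{D_{n+J₀+j}}(ξ/(p_{n+1}⋯p_{n+J₀+j}))| ≥ 2/π` for every `|ξ| < m`
(0-indexed: `p i`, `D i` stand for `p_{i+1}`, `D_{i+1}`). -/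
theorem statement8
    (p : ℕ → ℤ) (D : ℕ → Finset ℤ)
    (hp : ∀ n, 1 < |p n|) (hD : ∀ n, (D n).Nonempty)
    (C : ℝ) (hC0 : 0 ≤ C)
    (hC : ∀ n, ∀ d ∈ D n, |(d : ℝ) / (p n : ℝ)| ≤ C)
    (n : ℕ) (m : ℝ) (hm : 0 < m) :
    |∏ i ∈ Finset.Ico n (n + J0 C m), (p i : ℝ)|⁻¹ * (C * m) < 1 / 4 ∧
      ∀ ξ : ℝ, |ξ| < m →
        2 / Real.pi ≤
          ∏' j : ℕ, ‖(dHat (D (n + J0 C m + j))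
            (ξ / ∏ i ∈ Finset.Ico n (n + J0 C m + j + 1), (p i : ℝ)))‖ :=
  statement8_general p D hp hD C hC0 hC n m
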